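/- Let λ > 0, σ > 0, d ∈ (0,1/2), and let ℓ : ℝ → ℝ be a continuous function of bounded p-variation on compacts for some p ∈ (0,2) satisfying the Langevin integral equation ℓ(t) − ℓ(s) = −λ∫_s^t ℓ(u) du + g(t) − g(s) for all s ≤ t, where g is continuous of bounded p-variation on compacts. Define Z(t) := (σ ℓ(t))². Then Z satisfies, for all s ≤ t, Z(t) − Z(s) = −2λ ∫_s^t Z(u) du + 2σ ∫_s^t √(Z(u)) · sign(ℓ(u)) dg(u), and in particular if ℓ ≥ 0 on [s,t], Z(t) − Z(s) = −2λ∫_s^t Z(u)du + 2σ∫_s^t √(Z(u)) dg(u). -/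

import Mathlib

/-!
For a tagged partition write `Aᵢ = ℓ(yᵢ) - ℓ(xᵢ)` and `Bᵢ = ℓ(xᵢ₊₁) - ℓ(yᵢ)`. Since
`dg = dℓ + λ ℓ dt`, the Riemann–Stieltjes sum of `2ℓ dg` differs from `ℓ(t)² - ℓ(s)² + 2λ ∫ ℓ²`
by `∑ (Aᵢ² - Bᵢ²)` plus the error of a Riemann sum of `2λ ℓ²`, which is small by uniform
continuity. If all increments of `ℓ` are at most `η`, then `Aᵢ² ≤ η^(2-p) |Aᵢ|^p`, and
`∑ (|Aᵢ|^p + |Bᵢ|^p)` is a `p`-variation sum along the partition refined by its tags, hence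
bounded; so the first error is `O(η^(2-p))`, which vanishes with the mesh because `p < 2`.
Multiplying by `σ²` gives the identity for `Z`, as `2σ²ℓ = 2σ √Z sign ℓ`.
-/

open MeasureTheory Real Set

noncomputable section

/-- `x 0, …, x n` is a partition of `[a,b]`. -/
def IsPartition (a b : ℝ) (n : ℕ) (x : ℕ → ℝ) : Prop :=
  x 0 = a ∧ x n = b ∧ ∀ i < n, x i < x (i + 1)

/-- `f` has bounded `p`-variation on `[a,b]`. -/
def pVarBdd (p : ℝ) (f : ℝ → ℝ) (a b : ℝ) : Prop :=
  ∃ C : ℝ, ∀ n : ℕ, ∀ x : ℕ → ℝ, IsPartition a b n x →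
    ∑ i ∈ Finset.range n, |f (x (i + 1)) - f (x i)| ^ p ≤ C

/-- Riemann–Stieltjes sum of `f` against the integrator `h`. -/
def RSSum (f h : ℝ → ℝ) (n : ℕ) (x y : ℕ → ℝ) : ℝ :=
  ∑ i ∈ Finset.range n, f (y i) * (h (x (i + 1)) - h (x i))

/-- The Riemann–Stieltjes integral of `f` w.r.t. `h` over `[a,b]` exists and equals `I`. -/
def RSInteg (f h : ℝ → ℝ) (a b I : ℝ) : Prop :=
  ∀ ε > 0, ∃ δ > 0, ∀ n : ℕ, ∀ x y : ℕ → ℝ,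
    IsPartition a b n x → (∀ i < n, x (i + 1) - x i < δ) →
    (∀ i < n, x i ≤ y i ∧ y i ≤ x (i + 1)) →
    |RSSum f h n x y - I| < ε

open Finset in
lemma sum_range_two_mul (F : ℕ → ℝ) (n : ℕ) :
    ∑ j ∈ range (2 * n), F j = ∑ i ∈ range n, (F (2 * i) + F (2 * i + 1)) := by
  induction n with
  | zero => simp
  | succ n ih =>
    rw [show 2 * (n + 1) = 2 * n + 1 + 1 by ring, sum_range_succ, sum_range_succ, ih,
      sum_range_succ, add_assoc]

lemma sq_le_rpow_sub_mul_rpow {w η p : ℝ} (hw : 0 ≤ w) (hwη : w ≤ η) (hp : p ≤ 2) :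
    w ^ 2 ≤ η ^ (2 - p) * w ^ p := by
  rcases hw.eq_or_lt with rfl | hw
  · rw [zero_pow two_ne_zero]
    exact mul_nonneg (rpow_nonneg hwη _) (rpow_nonneg le_rfl _)
  calc w ^ 2 = w ^ (2 - p) * w ^ p := by
        rw [← rpow_add hw, sub_add_cancel, rpow_two]
    _ ≤ η ^ (2 - p) * w ^ p := by gcongr

lemma Real.abs_mul_sign (r : ℝ) : |r| * Real.sign r = r := by
  rcases lt_trichotomy r 0 with h | rfl | h
  · rw [Real.sign_of_neg h, abs_of_neg h]; ring
  · simp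
  · rw [Real.sign_of_pos h, abs_of_pos h, mul_one]

namespace IsPartition

variable {a b : ℝ} {n : ℕ} {x : ℕ → ℝ}

lemma le_of_le (hx : IsPartition a b n x) {i j : ℕ} (hij : i ≤ j) (hjn : j ≤ n) :
    x i ≤ x j := by
  have hmono : Monotone fun k => x (min k n) := monotone_nat_of_le_succ fun k => by
    rcases lt_or_ge k n with hk | hk
    · rw [min_eq_left hk.le, min_eq_left hk]
      exact (hx.2.2 k hk).le
    · rw [min_eq_right hk, min_eq_right (by omega)]
  simpa [min_eq_left hjn, min_eq_left (hij.trans hjn)] using hmono hij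

lemma mem_Icc (hx : IsPartition a b n x) {i : ℕ} (hi : i ≤ n) : x i ∈ Icc a b :=
  ⟨hx.1 ▸ hx.le_of_le i.zero_le hi, hx.2.1 ▸ hx.le_of_le hi le_rfl⟩

lemma Icc_subset (hx : IsPartition a b n x) {i : ℕ} (hi : i < n) :
    Icc (x i) (x (i + 1)) ⊆ Icc a b :=
  Icc_subset_Icc (hx.mem_Icc hi.le).1 (hx.mem_Icc hi).2

lemma abs_sub_le_of_mesh {f : ℝ → ℝ} {δ η : ℝ} (hx : IsPartition a b n x)
    (hf : ∀ u ∈ Icc a b, ∀ v ∈ Icc a b, dist u v < δ → dist (f u) (f v) < η)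
    (hmesh : ∀ i < n, x (i + 1) - x i < δ) {i : ℕ} (hi : i < n) {u v : ℝ}
    (hu : u ∈ Icc (x i) (x (i + 1))) (hv : v ∈ Icc (x i) (x (i + 1))) :
    |f u - f v| ≤ η :=
  (hf u (hx.Icc_subset hi hu) v (hx.Icc_subset hi hv)
    ((Real.dist_le_of_mem_Icc hu hv).trans_lt (hmesh i hi))).le

end IsPartition

lemma exists_isPartition_sum_eq (F : ℝ → ℝ → ℝ) (hF : ∀ c, F c c = 0) (z : ℕ → ℝ) :
    ∀ m, (∀ i < m, z i ≤ z (i + 1)) → ∃ n x, IsPartition (z 0) (z m) n x ∧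
      ∑ i ∈ Finset.range n, F (x i) (x (i + 1)) = ∑ i ∈ Finset.range m, F (z i) (z (i + 1))
  | 0, _ => ⟨0, z, ⟨rfl, rfl, by simp⟩, by simp⟩
  | m + 1, hz => by
    obtain ⟨n, x, ⟨hx0, hxn, hx⟩, hsum⟩ :=
      exists_isPartition_sum_eq F hF z m fun i hi => hz i (by omega)
    rw [Finset.sum_range_succ, ← hsum]
    rcases (hz m (by omega)).eq_or_lt with heq | hlt
    · exact ⟨n, x, ⟨hx0, hxn.trans heq, hx⟩, by rw [heq, hF, add_zero]⟩
    · have hupd : ∀ i ≤ n, Function.update x (n + 1) (z (m + 1)) i = x i := fun i hi =>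
        Function.update_of_ne (by omega) _ _
      refine ⟨n + 1, Function.update x (n + 1) (z (m + 1)), ⟨?_, ?_, fun i hi => ?_⟩, ?_⟩
      · rw [hupd 0 n.zero_le, hx0]
      · exact Function.update_self _ _ _
      · rcases (Nat.lt_succ_iff.mp hi).lt_or_eq with hi | rfl
        · rw [hupd i hi.le, hupd (i + 1) hi]
          exact hx i hi
        · rw [hupd i le_rfl, Function.update_self, hxn]
          exact hlt
      · rw [Finset.sum_range_succ, hupd n le_rfl, Function.update_self, hxn]
        congr 1
        exact Finset.sum_congr rfl fun i hi => by
          rw [hupd i (Finset.mem_range.mp hi).le, hupd (i + 1) (Finset.mem_range.mp hi)]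

lemma pVarBdd.exists_sum_le_of_tagged {p : ℝ} (hp : p ≠ 0) {f : ℝ → ℝ} {a b : ℝ}
    (hf : pVarBdd p f a b) : ∃ C : ℝ, ∀ n : ℕ, ∀ x y : ℕ → ℝ, IsPartition a b n x →
      (∀ i < n, x i ≤ y i ∧ y i ≤ x (i + 1)) →
      ∑ i ∈ Finset.range n, (|f (y i) - f (x i)| ^ p + |f (x (i + 1)) - f (y i)| ^ p) ≤ C := by
  obtain ⟨C, hC⟩ := hf
  refine ⟨C, fun n x y hx hy => ?_⟩
  -- interleave the tags with the partition points; a tag may coincide with a partition point,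
  -- so this sequence is only monotone
  set z : ℕ → ℝ := fun j => if j % 2 = 0 then x (j / 2) else y (j / 2)
  have hz_even : ∀ i, z (2 * i) = x i := fun i => by simp [z]
  have hz_odd : ∀ i, z (2 * i + 1) = y i := fun i => by
    simp only [z, if_neg (show (2 * i + 1) % 2 ≠ 0 by omega), show (2 * i + 1) / 2 = i by omega]
  have hz_mono : ∀ j < 2 * n, z j ≤ z (j + 1) := by
    intro j hj
    obtain ⟨i, rfl | rfl⟩ := Nat.even_or_odd' j
    · rw [hz_even, hz_odd]
      exact (hy i (by omega)).1
    · rw [hz_odd, show 2 * i + 1 + 1 = 2 * (i + 1) by ring, hz_even]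
      exact (hy i (by omega)).2
  obtain ⟨m, w, hw, hsum⟩ := exists_isPartition_sum_eq (fun u v => |f v - f u| ^ p)
    (fun c => by simp [zero_rpow hp]) z (2 * n) hz_mono
  rw [show z 0 = a from (hz_even 0).trans hx.1, hz_even, hx.2.1] at hw
  calc _ = ∑ j ∈ Finset.range (2 * n), |f (z (j + 1)) - f (z j)| ^ p := by
        rw [sum_range_two_mul]
        refine Finset.sum_congr rfl fun i _ => ?_
        rw [hz_even, hz_odd, show 2 * i + 1 + 1 = 2 * (i + 1) by ring, hz_even]
    _ ≤ C := hsum ▸ hC m w hw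

namespace RSInteg

variable {f f' h h' : ℝ → ℝ} {a b I : ℝ}

lemma congr (hf : RSInteg f h a b I) (hff' : ∀ u ∈ Icc a b, f u = f' u) :
    RSInteg f' h a b I := by
  intro ε hε
  obtain ⟨δ, hδ, H⟩ := hf ε hε
  refine ⟨δ, hδ, fun n x y hx hmesh hy => ?_⟩
  have hsum : RSSum f' h n x y = RSSum f h n x y :=
    Finset.sum_congr rfl fun i hi => by
      have hi := Finset.mem_range.mp hi
      rw [hff' (y i) (hx.Icc_subset hi (hy i hi))]
  exact hsum ▸ H n x y hx hmesh hy

lemma congr_integrator (hf : RSInteg f h a b I)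
    (hhh' : ∀ u ∈ Icc a b, h u - h' u = h a - h' a) : RSInteg f h' a b I := by
  intro ε hε
  obtain ⟨δ, hδ, H⟩ := hf ε hε
  refine ⟨δ, hδ, fun n x y hx hmesh hy => ?_⟩
  have hsum : RSSum f h' n x y = RSSum f h n x y :=
    Finset.sum_congr rfl fun i hi => by
      have hi := Finset.mem_range.mp hi
      have h₀ := hhh' (x i) (hx.mem_Icc hi.le)
      have h₁ := hhh' (x (i + 1)) (hx.mem_Icc hi)
      congr 1
      linarith
  exact hsum ▸ H n x y hx hmesh hy

lemma add {I' : ℝ} (hh : RSInteg f h a b I) (hh' : RSInteg f h' a b I') :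
    RSInteg f (fun u => h u + h' u) a b (I + I') := by
  intro ε hε
  obtain ⟨δ, hδ, H⟩ := hh (ε / 2) (half_pos hε)
  obtain ⟨δ', hδ', H'⟩ := hh' (ε / 2) (half_pos hε)
  refine ⟨min δ δ', lt_min hδ hδ', fun n x y hx hmesh hy => ?_⟩
  have hsum : RSSum f (fun u => h u + h' u) n x y = RSSum f h n x y + RSSum f h' n x y := by
    rw [RSSum, RSSum, RSSum, ← Finset.sum_add_distrib]
    exact Finset.sum_congr rfl fun i _ => by ring
  have e := H n x y hx (fun i hi => (hmesh i hi).trans_le (min_le_left _ _)) hy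
  have e' := H' n x y hx (fun i hi => (hmesh i hi).trans_le (min_le_right _ _)) hy
  rw [hsum, add_sub_add_comm]
  exact (abs_add_le _ _).trans_lt (by linarith)

lemma const_mul (hf : RSInteg f h a b I) (c : ℝ) :
    RSInteg (fun u => c * f u) h a b (c * I) := by
  intro ε hε
  obtain ⟨δ, hδ, H⟩ := hf (ε / (|c| + 1)) (by positivity)
  refine ⟨δ, hδ, fun n x y hx hmesh hy => ?_⟩
  have hsum : RSSum (fun u => c * f u) h n x y = c * RSSum f h n x y := by
    rw [RSSum, RSSum, Finset.mul_sum]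
    exact Finset.sum_congr rfl fun i _ => by ring
  rw [hsum, ← mul_sub, abs_mul]
  calc |c| * |RSSum f h n x y - I| ≤ |c| * (ε / (|c| + 1)) :=
        mul_le_mul_of_nonneg_left (H n x y hx hmesh hy).le (abs_nonneg c)
    _ < ε := by
        rw [mul_div_assoc', div_lt_iff₀ (by positivity)]
        nlinarith

end RSInteg

theorem RSInteg_two_mul_self {p : ℝ} (hp : 0 < p) (hp2 : p < 2) {f : ℝ → ℝ} {a b : ℝ}
    (hf : ContinuousOn f (Icc a b)) (hfv : pVarBdd p f a b) :
    RSInteg (fun u => 2 * f u) f a b (f b ^ 2 - f a ^ 2) := by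
  intro ε hε
  obtain ⟨C, hC⟩ := hfv.exists_sum_le_of_tagged hp.ne'
  set η := (ε / (|C| + 1)) ^ (2 - p)⁻¹
  have hη : 0 < η := by positivity
  have hηC : η ^ (2 - p) * C < ε := by
    rw [rpow_inv_rpow (by positivity) (by linarith), div_mul_eq_mul_div,
      div_lt_iff₀ (by positivity)]
    nlinarith [le_abs_self C]
  obtain ⟨δ, hδ, hfδ⟩ := Metric.uniformContinuousOn_iff.mp
    (isCompact_Icc.uniformContinuousOn_of_continuous hf) η hη
  refine ⟨δ, hδ, fun n x y hx hmesh hy => ?_⟩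
  have herr : RSSum (fun u => 2 * f u) f n x y - (f b ^ 2 - f a ^ 2) =
      ∑ i ∈ Finset.range n, ((f (y i) - f (x i)) ^ 2 - (f (x (i + 1)) - f (y i)) ^ 2) := by
    rw [← hx.1, ← hx.2.1, ← Finset.sum_range_sub (fun i => f (x i) ^ 2), RSSum,
      ← Finset.sum_sub_distrib]
    exact Finset.sum_congr rfl fun i _ => by ring
  rw [herr]
  calc _ ≤ ∑ i ∈ Finset.range n, ((f (y i) - f (x i)) ^ 2 + (f (x (i + 1)) - f (y i)) ^ 2) :=
        (Finset.abs_sum_le_sum_abs _ _).trans <| Finset.sum_le_sum fun i _ =>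
          (abs_sub _ _).trans_eq <| by rw [abs_sq, abs_sq]
    _ ≤ ∑ i ∈ Finset.range n,
          η ^ (2 - p) * (|f (y i) - f (x i)| ^ p + |f (x (i + 1)) - f (y i)| ^ p) := by
        refine Finset.sum_le_sum fun i hi => ?_
        have hi := Finset.mem_range.mp hi
        have hyi : y i ∈ Icc (x i) (x (i + 1)) := hy i hi
        have hxi : x i ∈ Icc (x i) (x (i + 1)) := ⟨le_rfl, hyi.1.trans hyi.2⟩
        have hxi' : x (i + 1) ∈ Icc (x i) (x (i + 1)) := ⟨hyi.1.trans hyi.2, le_rfl⟩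
        rw [mul_add, ← sq_abs (f (y i) - f (x i)), ← sq_abs (f (x (i + 1)) - f (y i))]
        exact add_le_add
          (sq_le_rpow_sub_mul_rpow (abs_nonneg _) (hx.abs_sub_le_of_mesh hfδ hmesh hi hyi hxi)
            hp2.le)
          (sq_le_rpow_sub_mul_rpow (abs_nonneg _) (hx.abs_sub_le_of_mesh hfδ hmesh hi hxi' hyi)
            hp2.le)
    _ ≤ η ^ (2 - p) * C := by
        rw [← Finset.mul_sum]
        exact mul_le_mul_of_nonneg_left (hC n x y hx hy) (by positivity)
    _ < ε := hηC

theorem RSInteg_intervalIntegral {f φ : ℝ → ℝ} (hf : Continuous f) (hφ : Continuous φ) {a b : ℝ}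
    (hab : a ≤ b) :
    RSInteg f (fun v => ∫ w in a..v, φ w) a b (∫ u in a..b, f u * φ u) := by
  intro ε hε
  obtain ⟨M, hM⟩ := (isCompact_Icc (a := a) (b := b)).exists_bound_of_continuousOn hφ.continuousOn
  have hM0 : 0 ≤ M := (norm_nonneg _).trans (hM a ⟨le_rfl, hab⟩)
  set η := ε / (M * (b - a) + 1)
  have hη : 0 < η := by
    have : 0 ≤ M * (b - a) := mul_nonneg hM0 (sub_nonneg.mpr hab)
    positivity
  obtain ⟨δ, hδ, hfδ⟩ := Metric.uniformContinuousOn_iff.mp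
    ((isCompact_Icc (a := a) (b := b)).uniformContinuousOn_of_continuous hf.continuousOn) η hη
  refine ⟨δ, hδ, fun n x y hx hmesh hy => ?_⟩
  have hφi (c d : ℝ) : IntervalIntegrable φ volume c d := hφ.intervalIntegrable c d
  have hfφi (c d : ℝ) : IntervalIntegrable (fun u => f u * φ u) volume c d :=
    (hf.mul hφ).intervalIntegrable c d
  have hkφi (k c d : ℝ) : IntervalIntegrable (fun u => k * φ u) volume c d :=
    (continuous_const.mul hφ).intervalIntegrable c d
  have herr : RSSum f (fun v => ∫ w in a..v, φ w) n x y - ∫ u in a..b, f u * φ u =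
      ∑ i ∈ Finset.range n, ∫ u in x i..x (i + 1), (f (y i) - f u) * φ u := by
    have hsplit : ∫ u in a..b, f u * φ u =
        ∑ i ∈ Finset.range n, ∫ u in x i..x (i + 1), f u * φ u := by
      rw [intervalIntegral.sum_integral_adjacent_intervals fun i _ => hfφi _ _,
        hx.1, hx.2.1]
    rw [hsplit, RSSum, ← Finset.sum_sub_distrib]
    refine Finset.sum_congr rfl fun i _ => ?_
    rw [intervalIntegral.integral_interval_sub_left (hφi _ _) (hφi _ _),
      ← intervalIntegral.integral_const_mul, ← intervalIntegral.integral_sub (hkφi _ _ _)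
        (hfφi _ _)]
    exact intervalIntegral.integral_congr fun u _ => by ring
  rw [herr]
  calc _ ≤ ∑ i ∈ Finset.range n, η * M * (x (i + 1) - x i) := by
        refine (Finset.abs_sum_le_sum_abs _ _).trans (Finset.sum_le_sum fun i hi => ?_)
        have hi := Finset.mem_range.mp hi
        have hle : x i ≤ x (i + 1) := (hx.2.2 i hi).le
        rw [← abs_of_nonneg (sub_nonneg.mpr hle), ← Real.norm_eq_abs]
        refine intervalIntegral.norm_integral_le_of_norm_le_const fun u hu => ?_
        rw [uIoc_of_le hle] at hu
        rw [norm_mul, Real.norm_eq_abs]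
        exact mul_le_mul (hx.abs_sub_le_of_mesh hfδ hmesh hi (hy i hi) (Ioc_subset_Icc_self hu))
          (hM u (hx.Icc_subset hi (Ioc_subset_Icc_self hu))) (norm_nonneg _) hη.le
    _ = η * (M * (b - a)) := by rw [← Finset.mul_sum, Finset.sum_range_sub, hx.1, hx.2.1]; ring
    _ < ε := by
        rw [div_mul_eq_mul_div, div_lt_iff₀ (by positivity)]
        nlinarith [mul_nonneg hM0 (sub_nonneg.mpr hab)]

theorem RSInteg_two_mul_of_langevin {lam p : ℝ} (hp : 0 < p) (hp2 : p < 2) {g ℓ : ℝ → ℝ}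
    (hℓ : Continuous ℓ) {s t : ℝ} (hst : s ≤ t) (hℓv : pVarBdd p ℓ s t)
    (hsol : ∀ v, s ≤ v → ℓ v - ℓ s = -lam * (∫ u in Icc s v, ℓ u) + g v - g s) :
    RSInteg (fun u => 2 * ℓ u) g s t
      (ℓ t ^ 2 - ℓ s ^ 2 + 2 * lam * ∫ u in Icc s t, ℓ u ^ 2) := by
  have hIcc (F : ℝ → ℝ) {v : ℝ} (hv : s ≤ v) : ∫ u in Icc s v, F u = ∫ u in s..v, F u := by
    rw [integral_Icc_eq_integral_Ioc, intervalIntegral.integral_of_le hv]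
  have hg : ∀ v ∈ Icc s t, (ℓ v + ∫ w in s..v, lam * ℓ w) - g v =
      (ℓ s + ∫ w in s..s, lam * ℓ w) - g s := by
    intro v hv
    have := hsol v hv.1
    rw [hIcc ℓ hv.1] at this
    rw [intervalIntegral.integral_same, intervalIntegral.integral_const_mul]
    linarith
  have hsum := (RSInteg_two_mul_self hp hp2 hℓ.continuousOn hℓv).add
    (RSInteg_intervalIntegral (f := fun u => 2 * ℓ u) (φ := fun u => lam * ℓ u)
      (by fun_prop) (by fun_prop) hst)
  convert hsum.congr_integrator hg using 2
  rw [hIcc _ hst, ← intervalIntegral.integral_const_mul]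
  exact intervalIntegral.integral_congr fun u _ => by ring

theorem stmt_16_general (lam σ p : ℝ) (hσ : 0 < σ)
    (hp : 0 < p) (hp2 : p < 2)
    (g ℓ Z : ℝ → ℝ) (hℓ : Continuous ℓ)
    (hℓv : ∀ a b : ℝ, pVarBdd p ℓ a b)
    (hsol : ∀ s t : ℝ, s ≤ t →
      ℓ t - ℓ s = -lam * (∫ u in Set.Icc s t, ℓ u) + g t - g s)
    (hZ : Z = fun t : ℝ => (σ * ℓ t) ^ 2) :
    (∀ s t : ℝ, s ≤ t →
      RSInteg (fun u => 2 * σ * Real.sqrt (Z u) * Real.sign (ℓ u)) g s t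
        (Z t - Z s + 2 * lam * ∫ u in Set.Icc s t, Z u))
    ∧ (∀ s t : ℝ, s ≤ t → (∀ u ∈ Set.Icc s t, 0 ≤ ℓ u) →
      RSInteg (fun u => 2 * σ * Real.sqrt (Z u)) g s t
        (Z t - Z s + 2 * lam * ∫ u in Set.Icc s t, Z u)) := by
  subst hZ
  have hZ (s t : ℝ) (hst : s ≤ t) : RSInteg (fun u => σ ^ 2 * (2 * ℓ u)) g s t
      ((σ * ℓ t) ^ 2 - (σ * ℓ s) ^ 2 + 2 * lam * ∫ u in Icc s t, (σ * ℓ u) ^ 2) := by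
    convert (RSInteg_two_mul_of_langevin hp hp2 hℓ hst (hℓv s t)
      fun v hv => hsol s v hv).const_mul (σ ^ 2) using 1
    simp_rw [mul_pow, integral_const_mul]
    ring
  refine ⟨fun s t hst => (hZ s t hst).congr fun u _ => ?_,
    fun s t hst hℓ0 => (hZ s t hst).congr fun u hu => ?_⟩
  · rw [sqrt_sq_eq_abs, abs_mul, abs_of_pos hσ]
    linear_combination (-2 * σ ^ 2) * Real.abs_mul_sign (ℓ u)
  · rw [sqrt_sq (mul_nonneg hσ.le (hℓ0 u hu))]
    ring

theorem stmt_16 (lam σ d p : ℝ) (hlam : 0 < lam) (hσ : 0 < σ)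
    (hd : 0 < d) (hd2 : d < 1/2) (hp : 0 < p) (hp2 : p < 2)
    (g ℓ Z : ℝ → ℝ) (hg : Continuous g) (hℓ : Continuous ℓ)
    (hgv : ∀ a b : ℝ, pVarBdd p g a b) (hℓv : ∀ a b : ℝ, pVarBdd p ℓ a b)
    (hsol : ∀ s t : ℝ, s ≤ t →
      ℓ t - ℓ s = -lam * (∫ u in Set.Icc s t, ℓ u) + g t - g s)
    (hZ : Z = fun t : ℝ => (σ * ℓ t) ^ 2) :
    (∀ s t : ℝ, s ≤ t →
      RSInteg (fun u => 2 * σ * Real.sqrt (Z u) * Real.sign (ℓ u)) g s t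
        (Z t - Z s + 2 * lam * ∫ u in Set.Icc s t, Z u))
    ∧ (∀ s t : ℝ, s ≤ t → (∀ u ∈ Set.Icc s t, 0 ≤ ℓ u) →
      RSInteg (fun u => 2 * σ * Real.sqrt (Z u)) g s t
        (Z t - Z s + 2 * lam * ∫ u in Set.Icc s t, Z u)) :=
  stmt_16_general lam σ p hσ hp hp2 g ℓ Z hℓ hℓv hsol hZ
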